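/- (Trust Region Update Performance.) Let π_k and π_{k+1} be policies with π_k(a|s) > 0 for all s, a. Suppose E_{s∼d^{π_k}, a∼π_{k+1}(·|s)}[A^{π_k}(s,a)] ≥ 0 and E_{s∼d^{π_k}}[D_KL(π_{k+1}‖π_k)[s]] ≤ δ for some δ > 0. Then J(π_{k+1}) - J(π_k) ≥ -√(2δ) γ ε^{π_{k+1}} / (1-γ)², where ε^{π_{k+1}} = max_s |E_{a∼π_{k+1}(·|s)}[A^{π_k}(s,a)]|. -/

import Mathlib

open BigOperators Finset Matrix

noncomputable section

variable {S A : Type*}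

/-- Policy transition matrix (column-stochastic): entry `(s', s)` is
`P_pol(s'|s) = ∑ a, P(s'|s,a) pol(a|s)`. -/
def Pmat [Fintype A] (P : S → A → S → ℝ) (pol : S → A → ℝ) : Matrix S S ℝ :=
  fun s' s => ∑ a, P s a s' * pol s a

/-- Discounted future state distribution `d^π = (1-γ) ∑_t γ^t P_π^t μ`. -/
def dFut [Fintype S] [DecidableEq S] [Fintype A] (γ : ℝ) (P : S → A → S → ℝ)
    (μ : S → ℝ) (pol : S → A → ℝ) : S → ℝ :=
  fun s => (1 - γ) * ∑' t : ℕ, γ ^ t * ((Pmat P pol ^ t) *ᵥ μ) s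

/-- Discounted return `J(π)` (also used as the cost return `J_C(π)` with a cost `C`
in place of the reward `R`). -/
def Jret [Fintype S] [DecidableEq S] [Fintype A] (γ : ℝ) (P : S → A → S → ℝ)
    (R : S → A → S → ℝ) (μ : S → ℝ) (pol : S → A → ℝ) : ℝ :=
  (1 / (1 - γ)) * ∑ s, dFut γ P μ pol s * (∑ a, pol s a * (∑ s', P s a s' * R s a s'))

/-- Total variational divergence between action distributions at state `s`. -/
def DTV [Fintype A] (pol' pol : S → A → ℝ) (s : S) : ℝ :=
  (1 / 2) * ∑ a, |pol' s a - pol s a|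

/-- Kullback–Leibler divergence between action distributions at state `s`. -/
def DKL [Fintype A] (pol' pol : S → A → ℝ) (s : S) : ℝ :=
  ∑ a, pol' s a * Real.log (pol' s a / pol s a)

/-- Advantage function `A^π(s,a) = Q^π(s,a) - V^π(s)` built from a value function `V`
(also used for cost advantages with a cost `C` in place of `R`). -/
def Adv [Fintype S] (γ : ℝ) (P : S → A → S → ℝ) (R : S → A → S → ℝ)
    (V : S → ℝ) (s : S) (a : A) : ℝ :=
  (∑ s', P s a s' * (R s a s' + γ * V s')) - V s

/-- `ε_f^{π'} = max_s |E_{a∼π'(·|s), s'∼P}[δ_f(s,a,s')]|` where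
`δ_f(s,a,s') = R(s,a,s') + γ f(s') - f(s)`. -/
def epsF [Fintype S] [Fintype A] (γ : ℝ) (P : S → A → S → ℝ) (R : S → A → S → ℝ)
    (f : S → ℝ) (pol' : S → A → ℝ) : ℝ :=
  ⨆ s, |∑ a, pol' s a * (∑ s', P s a s' * (R s a s' + γ * f s' - f s))|

/-- Surrogate `L_{π,f}(π') = E_{s∼d^π, a∼π, s'∼P}[(π'(a|s)/π(a|s) - 1) δ_f(s,a,s')]`. -/
def Lsurr [Fintype S] [DecidableEq S] [Fintype A] (γ : ℝ) (P : S → A → S → ℝ)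
    (R : S → A → S → ℝ) (μ : S → ℝ) (f : S → ℝ) (pol pol' : S → A → ℝ) : ℝ :=
  ∑ s, dFut γ P μ pol s * (∑ a, pol s a * (∑ s', P s a s' *
    ((pol' s a / pol s a - 1) * (R s a s' + γ * f s' - f s))))

/-!
By the performance difference identity, `(1 - γ) (J(π') - J(π)) = E_{s∼d^{π'}}[Ā(s)]` with
`Ā(s) = E_{a∼π'(·|s)}[A^π(s,a)]`. Replacing `d^{π'}` by `d^π` costs at most
`‖d^{π'} - d^π‖₁ ε`, and the hypothesis on the surrogate makes the `d^π`-expectation nonnegative.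
Subtracting the fixed-point equations `d = (1 - γ) μ + γ P_π d` of the two discounted state
distributions gives `(1 - γ) ‖d^{π'} - d^π‖₁ ≤ γ E_{s∼d^π} ‖π'(·|s) - π(·|s)‖₁`, and Pinsker's
inequality together with Jensen's bounds the right-hand side by `γ √(2δ)`.
-/

open Real InformationTheory

theorem abs_sum_mul_le_sum_abs_mul_iSup_abs {ι : Type*} [Fintype ι] (u f : ι → ℝ) :
    |∑ i, u i * f i| ≤ (∑ i, |u i|) * ⨆ i, |f i| := by
  rw [sum_mul]
  refine (abs_sum_le_sum_abs _ _).trans (sum_le_sum fun i _ => ?_)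
  rw [abs_mul]
  exact mul_le_mul_of_nonneg_left
    (le_ciSup (f := fun i => |f i|) (Set.finite_range _).bddAbove i) (abs_nonneg _)

theorem monotoneOn_add_one_mul_log_sub :
    MonotoneOn (fun x => (x + 1) * log x - 2 * (x - 1)) (Set.Ioi 0) := by
  have hderiv : ∀ x : ℝ, 0 < x →
      HasDerivAt (fun x => (x + 1) * log x - 2 * (x - 1)) (log x + x⁻¹ - 1) x := by
    intro x hx
    refine ((((hasDerivAt_id' x).add_const 1).mul (hasDerivAt_log hx.ne')).sub
      (((hasDerivAt_id' x).sub_const 1).const_mul 2)).congr_deriv ?_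
    field_simp
    ring
  refine monotoneOn_of_deriv_nonneg (convex_Ioi 0)
    (fun x hx => (hderiv x hx).continuousAt.continuousWithinAt)
    (fun x hx => (hderiv x (interior_subset hx)).differentiableAt.differentiableWithinAt)
    (fun x hx => ?_)
  rw [interior_Ioi] at hx
  rw [(hderiv x hx).deriv]
  linarith [one_sub_inv_le_log_of_pos hx]

theorem three_mul_sub_one_sq_le_klFun {x : ℝ} (hx : 0 ≤ x) :
    3 * (x - 1) ^ 2 ≤ 2 * (x + 2) * klFun x := by
  -- `F` decreases on `[0, 1]` and increases on `[1, ∞)`: `F'` is monotone and vanishes at `1`.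
  set F : ℝ → ℝ := fun x => 2 * (x + 2) * klFun x - 3 * (x - 1) ^ 2
  have hF : Continuous F := by fun_prop
  have hderiv : ∀ x : ℝ, 0 < x → HasDerivAt F (4 * ((x + 1) * log x - 2 * (x - 1))) x := by
    intro x hx
    refine ((((hasDerivAt_id' x).add_const 2).const_mul 2).mul (hasDerivAt_klFun hx.ne')).sub
      ((((hasDerivAt_id' x).sub_const 1).pow 2).const_mul 3) |>.congr_deriv ?_
    rw [klFun_apply]
    ring
  have hG := monotoneOn_add_one_mul_log_sub
  have hG1 : (1 + 1) * log 1 - 2 * (1 - 1 : ℝ) = 0 := by simp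
  suffices F 1 ≤ F x by simpa [F, klFun_one] using this
  rcases le_total x 1 with hx1 | hx1
  · refine antitoneOn_of_deriv_nonpos (convex_Icc 0 1) hF.continuousOn
      (fun y hy => ?_) (fun y hy => ?_) ⟨hx, hx1⟩ ⟨zero_le_one, le_rfl⟩ hx1
    · rw [interior_Icc] at hy
      exact (hderiv y hy.1).differentiableAt.differentiableWithinAt
    · rw [interior_Icc] at hy
      rw [(hderiv y hy.1).deriv]
      have := hG hy.1 (Set.mem_Ioi.2 one_pos) hy.2.le
      simp only [hG1] at this
      linarith
  · refine monotoneOn_of_deriv_nonneg (convex_Ici 1) hF.continuousOn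
      (fun y hy => ?_) (fun y hy => ?_) Set.self_mem_Ici hx1 hx1
    · rw [interior_Ici] at hy
      exact (hderiv y (one_pos.trans hy)).differentiableAt.differentiableWithinAt
    · rw [interior_Ici] at hy
      rw [(hderiv y (one_pos.trans hy)).deriv]
      have := hG (Set.mem_Ioi.2 one_pos) (Set.mem_Ioi.2 (one_pos.trans hy)) hy.le
      simp only [hG1] at this
      linarith

theorem sq_sub_le_mul_mul_klFun_div {p q : ℝ} (hp : 0 ≤ p) (hq : 0 < q) :
    (p - q) ^ 2 ≤ 2 * (p + 2 * q) / 3 * (q * klFun (p / q)) := by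
  have h := mul_le_mul_of_nonneg_left (three_mul_sub_one_sq_le_klFun (div_nonneg hp hq.le))
    (sq_nonneg q)
  have e1 : q ^ 2 * (3 * (p / q - 1) ^ 2) = 3 * (p - q) ^ 2 := by
    field_simp
  have e2 : q ^ 2 * (2 * (p / q + 2) * klFun (p / q))
      = 3 * (2 * (p + 2 * q) / 3 * (q * klFun (p / q))) := by
    field_simp
  linarith

theorem sq_sum_abs_sub_le_two_mul_sum_mul_log {ι : Type*} [Fintype ι] {p q : ι → ℝ}
    (hp : ∀ i, 0 ≤ p i) (hq : ∀ i, 0 < q i) (hp1 : ∑ i, p i = 1) (hq1 : ∑ i, q i = 1) :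
    (∑ i, |p i - q i|) ^ 2 ≤ 2 * ∑ i, p i * log (p i / q i) := by
  -- Cauchy–Schwarz against the weights `2 (p + 2 q) / 3`, which sum to `2`.
  have hcs := sum_sq_le_sum_mul_sum_of_sq_le_mul univ
    (fun i _ => by have := hp i; have := hq i; positivity)
    (fun i _ => mul_nonneg (hq i).le (klFun_nonneg (div_nonneg (hp i) (hq i).le)))
    (fun i _ => (sq_abs (p i - q i)).trans_le (sq_sub_le_mul_mul_klFun_div (hp i) (hq i)))
  have hw : ∑ i, 2 * (p i + 2 * q i) / 3 = 2 := by
    simp only [← sum_div, ← mul_sum, sum_add_distrib, hp1, hq1]; norm_num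
  have hkl : ∀ i, q i * klFun (p i / q i) = p i * log (p i / q i) + q i - p i := fun i => by
    rw [klFun_apply]
    field_simp [(hq i).ne']
  have hg : ∑ i, q i * klFun (p i / q i) = ∑ i, p i * log (p i / q i) := by
    simp only [hkl, sum_sub_distrib, sum_add_distrib, hp1, hq1, add_sub_cancel_right]
  rwa [hw, hg] at hcs

namespace Matrix

variable {n : Type*} [Fintype n]

theorem sum_abs_mulVec_le (M : Matrix n n ℝ) (v : n → ℝ) :
    ∑ i, |(M *ᵥ v) i| ≤ ∑ j, (∑ i, |M i j|) * |v j| := by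
  calc ∑ i, |(M *ᵥ v) i| ≤ ∑ i, ∑ j, |M i j| * |v j| :=
        sum_le_sum fun i _ => (abs_sum_le_sum_abs _ _).trans_eq (by simp only [abs_mul])
    _ = ∑ j, (∑ i, |M i j|) * |v j| := by rw [sum_comm]; simp only [sum_mul]

variable [DecidableEq n]

/-- `dFut γ P μ pol` is `discountedDistribution γ (Pmat P pol) μ` by definition. -/
def discountedDistribution (γ : ℝ) (M : Matrix n n ℝ) (μ : n → ℝ) : n → ℝ :=
  fun i => (1 - γ) * ∑' t : ℕ, γ ^ t * ((M ^ t) *ᵥ μ) i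

variable {γ : ℝ} {M : Matrix n n ℝ} {μ : n → ℝ}

theorem summable_discounted_pow_mulVec (hM : M ∈ colStochastic ℝ n) (hμ : ∀ i, 0 ≤ μ i)
    (hγ0 : 0 ≤ γ) (hγ1 : γ < 1) (i : n) :
    Summable fun t : ℕ => γ ^ t * ((M ^ t) *ᵥ μ) i := by
  have hMt : ∀ t, M ^ t ∈ colStochastic ℝ n := fun t => pow_mem hM t
  have hbound : ∀ t, ((M ^ t) *ᵥ μ) i ≤ ∑ j, μ j := fun t => by
    rw [← sum_mulVec_of_mem_colStochastic (hMt t)]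
    exact single_le_sum (fun j _ => nonneg_mulVec_of_mem_colStochastic (hMt t) hμ j)
      (mem_univ i)
  refine Summable.of_nonneg_of_le
    (fun t => mul_nonneg (pow_nonneg hγ0 t) (nonneg_mulVec_of_mem_colStochastic (hMt t) hμ i))
    (fun t => mul_le_mul_of_nonneg_left (hbound t) (pow_nonneg hγ0 t))
    ((summable_geometric_of_lt_one hγ0 hγ1).mul_right _)

theorem discountedDistribution_nonneg (hM : M ∈ colStochastic ℝ n) (hμ : ∀ i, 0 ≤ μ i)
    (hγ0 : 0 ≤ γ) (hγ1 : γ < 1) (i : n) : 0 ≤ discountedDistribution γ M μ i :=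
  mul_nonneg (by linarith) <| tsum_nonneg fun t =>
    mul_nonneg (pow_nonneg hγ0 t) (nonneg_mulVec_of_mem_colStochastic (pow_mem hM t) hμ i)

theorem sum_discountedDistribution (hM : M ∈ colStochastic ℝ n) (hμ : ∀ i, 0 ≤ μ i)
    (hγ0 : 0 ≤ γ) (hγ1 : γ < 1) :
    ∑ i, discountedDistribution γ M μ i = ∑ i, μ i := by
  have hsum : ∀ t : ℕ, ∑ i, γ ^ t * ((M ^ t) *ᵥ μ) i = γ ^ t * ∑ i, μ i := fun t => by
    rw [← mul_sum, sum_mulVec_of_mem_colStochastic (pow_mem hM t)]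
  simp only [discountedDistribution]
  rw [← mul_sum,
    ← Summable.tsum_finsetSum fun i _ => summable_discounted_pow_mulVec hM hμ hγ0 hγ1 i,
    tsum_congr hsum, tsum_mul_right, tsum_geometric_of_lt_one hγ0 hγ1, ← mul_assoc,
    mul_inv_cancel₀ (by linarith), one_mul]

theorem discountedDistribution_eq_add (hM : M ∈ colStochastic ℝ n) (hμ : ∀ i, 0 ≤ μ i)
    (hγ0 : 0 ≤ γ) (hγ1 : γ < 1) :
    discountedDistribution γ M μ = (1 - γ) • μ + γ • (M *ᵥ discountedDistribution γ M μ) := by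
  have hsummable := summable_discounted_pow_mulVec hM hμ hγ0 hγ1
  ext i
  have hshift : ∑' t : ℕ, γ ^ t * ((M ^ t) *ᵥ μ) i
      = μ i + γ * ∑' t : ℕ, γ ^ t * ((M ^ (t + 1)) *ᵥ μ) i := by
    rw [(hsummable i).tsum_eq_zero_add, ← tsum_mul_left]
    simp only [pow_zero, one_mulVec, one_mul]
    exact congrArg _ (tsum_congr fun t => by ring)
  have hstep : (M *ᵥ discountedDistribution γ M μ) i
      = (1 - γ) * ∑' t : ℕ, γ ^ t * ((M ^ (t + 1)) *ᵥ μ) i := by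
    have hpow : ∀ t : ℕ, γ ^ t * ((M ^ (t + 1)) *ᵥ μ) i
        = ∑ j, M i j * (γ ^ t * ((M ^ t) *ᵥ μ) j) := fun t => by
      rw [pow_succ', ← mulVec_mulVec, mulVec, dotProduct, mul_sum]
      exact sum_congr rfl fun j _ => by ring
    rw [tsum_congr hpow, Summable.tsum_finsetSum fun j _ => (hsummable j).mul_left _, mul_sum]
    exact sum_congr rfl fun j _ => by rw [discountedDistribution, tsum_mul_left]; ring
  simp only [Pi.add_apply, Pi.smul_apply, smul_eq_mul, hstep]
  rw [discountedDistribution, hshift]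
  ring

theorem sum_abs_discountedDistribution_sub_le {M' : Matrix n n ℝ}
    (hM : M ∈ colStochastic ℝ n) (hM' : M' ∈ colStochastic ℝ n) (hμ : ∀ i, 0 ≤ μ i)
    (hγ0 : 0 ≤ γ) (hγ1 : γ < 1) :
    (1 - γ) * ∑ i, |discountedDistribution γ M' μ i - discountedDistribution γ M μ i|
      ≤ γ * ∑ j, discountedDistribution γ M μ j * ∑ i, |M' i j - M i j| := by
  set d := discountedDistribution γ M μ
  set d' := discountedDistribution γ M' μ
  have hd : ∀ j, 0 ≤ d j := discountedDistribution_nonneg hM hμ hγ0 hγ1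
  have hdiff : d' - d = γ • (M' *ᵥ (d' - d) + (M' - M) *ᵥ d) := by
    have hd'eq : d' = (1 - γ) • μ + γ • (M' *ᵥ d') := discountedDistribution_eq_add hM' hμ hγ0 hγ1
    have hdeq : d = (1 - γ) • μ + γ • (M *ᵥ d) := discountedDistribution_eq_add hM hμ hγ0 hγ1
    conv_lhs => rw [hd'eq, hdeq]
    simp only [mulVec_sub, sub_mulVec, smul_add, smul_sub]
    abel
  have h1 : ∑ i, |(M' *ᵥ (d' - d)) i| ≤ ∑ i, |d' i - d i| := by
    refine (sum_abs_mulVec_le M' _).trans_eq (sum_congr rfl fun j _ => ?_)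
    simp [abs_of_nonneg (nonneg_of_mem_colStochastic hM'), sum_col_of_mem_colStochastic hM']
  have h2 : ∑ i, |((M' - M) *ᵥ d) i| ≤ ∑ j, d j * ∑ i, |M' i j - M i j| := by
    refine (sum_abs_mulVec_le _ _).trans_eq (sum_congr rfl fun j _ => ?_)
    rw [abs_of_nonneg (hd j), mul_comm]
    rfl
  have h3 : ∑ i, |d' i - d i| ≤ γ * (∑ i, |d' i - d i| + ∑ j, d j * ∑ i, |M' i j - M i j|) := by
    calc ∑ i, |d' i - d i| = ∑ i, |(d' - d) i| := rfl
      _ = ∑ i, |(γ • (M' *ᵥ (d' - d) + (M' - M) *ᵥ d)) i| := by rw [← hdiff]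
      _ = γ * ∑ i, |(M' *ᵥ (d' - d)) i + ((M' - M) *ᵥ d) i| := by
        rw [mul_sum]
        simp only [Pi.smul_apply, Pi.add_apply, smul_eq_mul, abs_mul, abs_of_nonneg hγ0]
      _ ≤ γ * (∑ i, |(M' *ᵥ (d' - d)) i| + ∑ i, |((M' - M) *ᵥ d) i|) := by
        rw [← sum_add_distrib]
        exact mul_le_mul_of_nonneg_left (sum_le_sum fun i _ => abs_add_le _ _) hγ0
      _ ≤ _ := mul_le_mul_of_nonneg_left (add_le_add h1 h2) hγ0
  linarith

end Matrix

section MarkovDecisionProcess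

variable [Fintype S] [Fintype A] {P : S → A → S → ℝ}

theorem Pmat_mem_colStochastic [DecidableEq S] {pol : S → A → ℝ}
    (hP0 : ∀ s a s', 0 ≤ P s a s') (hP1 : ∀ s a, ∑ s', P s a s' = 1)
    (hpol0 : ∀ s a, 0 ≤ pol s a) (hpol1 : ∀ s, ∑ a, pol s a = 1) :
    Pmat P pol ∈ colStochastic ℝ S := by
  refine mem_colStochastic_iff_sum.2
    ⟨fun s' s => sum_nonneg fun a _ => mul_nonneg (hP0 s a s') (hpol0 s a), fun s => ?_⟩
  simp only [Pmat]
  rw [sum_comm]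
  simp only [← sum_mul, hP1, one_mul, hpol1]

theorem sum_abs_Pmat_sub_le (hP0 : ∀ s a s', 0 ≤ P s a s') (hP1 : ∀ s a, ∑ s', P s a s' = 1)
    (pol' pol : S → A → ℝ) (s : S) :
    ∑ s', |Pmat P pol' s' s - Pmat P pol s' s| ≤ ∑ a, |pol' s a - pol s a| :=
  calc ∑ s', |Pmat P pol' s' s - Pmat P pol s' s|
      = ∑ s', |∑ a, P s a s' * (pol' s a - pol s a)| := by
        simp only [Pmat, mul_sub, sum_sub_distrib]
    _ ≤ ∑ s', ∑ a, P s a s' * |pol' s a - pol s a| :=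
        sum_le_sum fun s' _ => (abs_sum_le_sum_abs _ _).trans_eq <|
          sum_congr rfl fun a _ => by rw [abs_mul, abs_of_nonneg (hP0 s a s')]
    _ = ∑ a, |pol' s a - pol s a| := by
        rw [sum_comm]
        simp only [← sum_mul, hP1, one_mul]

theorem sum_mul_Adv_eq_zero {γ : ℝ} {R : S → A → S → ℝ} {V : S → ℝ} {pol : S → A → ℝ} {s : S}
    (hpol1 : ∑ a, pol s a = 1)
    (hV : V s = ∑ a, pol s a * ∑ s', P s a s' * (R s a s' + γ * V s')) :
    ∑ a, pol s a * Adv γ P R V s a = 0 := by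
  simp only [Adv, mul_sub, sum_sub_distrib, ← sum_mul, hpol1, one_mul, ← hV, sub_self]

theorem sum_mul_Adv_eq {γ : ℝ} {R : S → A → S → ℝ} {V : S → ℝ} {pol : S → A → ℝ}
    (hpol1 : ∀ s, ∑ a, pol s a = 1) :
    (fun s => ∑ a, pol s a * Adv γ P R V s a)
      = (fun s => ∑ a, pol s a * ∑ s', P s a s' * R s a s') + γ • (V ᵥ* Pmat P pol) - V := by
  ext s
  have hV1 : ∑ a, pol s a * V s = V s := by rw [← sum_mul, hpol1, one_mul]
  simp only [Adv, Pi.add_apply, Pi.sub_apply, Pi.smul_apply, smul_eq_mul, vecMul, dotProduct,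
    Pmat, mul_sub, sum_sub_distrib, hV1, mul_add, sum_add_distrib, mul_sum]
  rw [sum_comm (f := fun a s' => pol s a * (P s a s' * (γ * V s')))]
  congr 2
  exact sum_congr rfl fun s' _ => sum_congr rfl fun a _ => by ring

theorem performance_difference [DecidableEq S] {γ : ℝ} {μ : S → ℝ} {pol : S → A → ℝ}
    (hγ0 : 0 ≤ γ) (hγ1 : γ < 1) (hP0 : ∀ s a s', 0 ≤ P s a s')
    (hP1 : ∀ s a, ∑ s', P s a s' = 1) (hμ0 : ∀ s, 0 ≤ μ s)
    (hpol0 : ∀ s a, 0 ≤ pol s a) (hpol1 : ∀ s, ∑ a, pol s a = 1)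
    (R : S → A → S → ℝ) (V : S → ℝ) :
    ∑ s, dFut γ P μ pol s * ∑ a, pol s a * Adv γ P R V s a
      = (1 - γ) * (Jret γ P R μ pol - ∑ s, μ s * V s) := by
  set M := Pmat P pol
  set d := dFut γ P μ pol
  set r : S → ℝ := fun s => ∑ a, pol s a * ∑ s', P s a s' * R s a s'
  have hrec : γ • (M *ᵥ d) = d - (1 - γ) • μ :=
    eq_sub_of_add_eq' (discountedDistribution_eq_add
      (Pmat_mem_colStochastic hP0 hP1 hpol0 hpol1) hμ0 hγ0 hγ1).symm
  have hJ : (1 - γ) * Jret γ P R μ pol = d ⬝ᵥ r := by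
    rw [Jret, ← mul_assoc, mul_one_div_cancel (by linarith), one_mul]
    rfl
  calc ∑ s, d s * ∑ a, pol s a * Adv γ P R V s a = d ⬝ᵥ (r + γ • (V ᵥ* M) - V) := by
        rw [← sum_mul_Adv_eq hpol1]
        rfl
    _ = d ⬝ᵥ r + V ⬝ᵥ (γ • (M *ᵥ d)) - d ⬝ᵥ V := by
        rw [dotProduct_sub, dotProduct_add, dotProduct_smul, dotProduct_smul,
          dotProduct_comm d (V ᵥ* M), dotProduct_mulVec]
    _ = (1 - γ) * (Jret γ P R μ pol - ∑ s, μ s * V s) := by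
        rw [hrec, dotProduct_sub, dotProduct_smul, dotProduct_comm V d, ← hJ, smul_eq_mul,
          dotProduct_comm V μ]
        simp only [dotProduct]
        ring

theorem sum_mul_sum_abs_sub_le_sqrt {d : S → ℝ} {pol' pol : S → A → ℝ}
    (hd0 : ∀ s, 0 ≤ d s) (hd1 : ∑ s, d s = 1)
    (hpol'0 : ∀ s a, 0 ≤ pol' s a) (hpol'1 : ∀ s, ∑ a, pol' s a = 1)
    (hpol0 : ∀ s a, 0 < pol s a) (hpol1 : ∀ s, ∑ a, pol s a = 1) :
    ∑ s, d s * ∑ a, |pol' s a - pol s a| ≤ √(2 * ∑ s, d s * DKL pol' pol s) := by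
  have hpinsker : ∀ s, (∑ a, |pol' s a - pol s a|) ^ 2 ≤ 2 * DKL pol' pol s := fun s =>
    sq_sum_abs_sub_le_two_mul_sum_mul_log (hpol'0 s) (hpol0 s) (hpol'1 s) (hpol1 s)
  have hcs := sum_sq_le_sum_mul_sum_of_sq_le_mul univ
    (r := fun s => d s * ∑ a, |pol' s a - pol s a|) (g := fun s => d s * (2 * DKL pol' pol s))
    (fun s _ => hd0 s)
    (fun s _ => mul_nonneg (hd0 s) ((sq_nonneg _).trans (hpinsker s)))
    (fun s _ => by
      rw [mul_pow, sq (d s), mul_assoc]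
      exact mul_le_mul_of_nonneg_left (mul_le_mul_of_nonneg_left (hpinsker s) (hd0 s)) (hd0 s))
  rw [hd1, one_mul] at hcs
  refine (le_abs_self _).trans (Real.abs_le_sqrt (hcs.trans_eq ?_))
  rw [mul_sum]
  exact sum_congr rfl fun s _ => by ring

theorem mul_sum_abs_dFut_sub_le [DecidableEq S] {γ : ℝ} {μ : S → ℝ} {pol' pol : S → A → ℝ}
    (hγ0 : 0 ≤ γ) (hγ1 : γ < 1) (hP0 : ∀ s a s', 0 ≤ P s a s')
    (hP1 : ∀ s a, ∑ s', P s a s' = 1) (hμ0 : ∀ s, 0 ≤ μ s) (hμ1 : ∑ s, μ s = 1)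
    (hpol'0 : ∀ s a, 0 ≤ pol' s a) (hpol'1 : ∀ s, ∑ a, pol' s a = 1)
    (hpol0 : ∀ s a, 0 < pol s a) (hpol1 : ∀ s, ∑ a, pol s a = 1) :
    (1 - γ) * ∑ s, |dFut γ P μ pol' s - dFut γ P μ pol s|
      ≤ γ * √(2 * ∑ s, dFut γ P μ pol s * DKL pol' pol s) := by
  have hM := Pmat_mem_colStochastic hP0 hP1 (fun s a => (hpol0 s a).le) hpol1
  have hM' := Pmat_mem_colStochastic hP0 hP1 hpol'0 hpol'1
  have hd0 : ∀ s, 0 ≤ dFut γ P μ pol s := discountedDistribution_nonneg hM hμ0 hγ0 hγ1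
  calc (1 - γ) * ∑ s, |dFut γ P μ pol' s - dFut γ P μ pol s|
      ≤ γ * ∑ s, dFut γ P μ pol s * ∑ s', |Pmat P pol' s' s - Pmat P pol s' s| :=
        sum_abs_discountedDistribution_sub_le hM hM' hμ0 hγ0 hγ1
    _ ≤ γ * ∑ s, dFut γ P μ pol s * ∑ a, |pol' s a - pol s a| := by
        gcongr with s
        exacts [hd0 s, sum_abs_Pmat_sub_le hP0 hP1 pol' pol s]
    _ ≤ γ * √(2 * ∑ s, dFut γ P μ pol s * DKL pol' pol s) := by
        gcongr
        exact sum_mul_sum_abs_sub_le_sqrt hd0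
          ((sum_discountedDistribution hM hμ0 hγ0 hγ1).trans hμ1) hpol'0 hpol'1 hpol0 hpol1

end MarkovDecisionProcess

theorem trust_region_update_performance_general
    [Fintype S] [DecidableEq S] [Fintype A]
    (γ : ℝ) (hγ0 : 0 ≤ γ) (hγ1 : γ < 1)
    (P : S → A → S → ℝ) (hP0 : ∀ s a s', 0 ≤ P s a s')
    (hP1 : ∀ s a, (∑ s', P s a s') = 1)
    (μ : S → ℝ) (hμ0 : ∀ s, 0 ≤ μ s) (hμ1 : (∑ s, μ s) = 1)
    (R : S → A → S → ℝ)
    (pk pk1 : S → A → ℝ)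
    (hpk0 : ∀ s a, 0 < pk s a) (hpk1 : ∀ s, (∑ a, pk s a) = 1)
    (hpk10 : ∀ s a, 0 ≤ pk1 s a) (hpk11 : ∀ s, (∑ a, pk1 s a) = 1)
    (V : S → ℝ)
    (hV : ∀ s, V s = ∑ a, pk s a * (∑ s', P s a s' * (R s a s' + γ * V s')))
    (δ : ℝ)
    (hsurr : 0 ≤ ∑ s, dFut γ P μ pk s * (∑ a, pk1 s a * Adv γ P R V s a))
    (hkl : (∑ s, dFut γ P μ pk s * DKL pk1 pk s) ≤ δ) :
    Jret γ P R μ pk1 - Jret γ P R μ pk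
      ≥ -(Real.sqrt (2 * δ) * γ * (⨆ t, |∑ a, pk1 t a * Adv γ P R V t a|))
          / (1 - γ) ^ 2 := by
  have hpk0' : ∀ s a, 0 ≤ pk s a := fun s a => (hpk0 s a).le
  set d := dFut γ P μ pk
  set d' := dFut γ P μ pk1
  set f : S → ℝ := fun s => ∑ a, pk1 s a * Adv γ P R V s a
  set ε := ⨆ t, |f t|
  have hgain : (1 - γ) * (Jret γ P R μ pk1 - Jret γ P R μ pk) = ∑ s, d' s * f s := by
    have h := performance_difference hγ0 hγ1 hP0 hP1 hμ0 hpk0' hpk1 R V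
    simp only [sum_mul_Adv_eq_zero (hpk1 _) (hV _), mul_zero, sum_const_zero] at h
    linear_combination h - performance_difference hγ0 hγ1 hP0 hP1 hμ0 hpk10 hpk11 R V
  have hshift : ∑ s, d s * f s - (∑ s, |d' s - d s|) * ε ≤ ∑ s, d' s * f s := by
    have h := abs_sum_mul_le_sum_abs_mul_iSup_abs (fun s => d' s - d s) f
    simp only [sub_mul, sum_sub_distrib] at h
    linarith [neg_abs_le (∑ s, d' s * f s - ∑ s, d s * f s)]
  have hdist : (1 - γ) * ∑ s, |d' s - d s| ≤ γ * √(2 * δ) := by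
    refine (mul_sum_abs_dFut_sub_le hγ0 hγ1 hP0 hP1 hμ0 hμ1 hpk10 hpk11 hpk0 hpk1).trans ?_
    gcongr
  have hε : 0 ≤ ε := Real.iSup_nonneg fun _ => abs_nonneg _
  have hγ : 0 < 1 - γ := sub_pos.2 hγ1
  rw [ge_iff_le, div_le_iff₀ (by positivity)]
  nlinarith [mul_le_mul_of_nonneg_left hshift hγ.le, mul_le_mul_of_nonneg_right hdist hε,
    mul_nonneg hγ.le hsurr]

/-- **Proposition 1 (trust region update performance).** If
`E_{s∼d^{π_k}, a∼π_{k+1}}[A^{π_k}(s,a)] ≥ 0` and the average KL divergence is at most `δ`, then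
`J(π_{k+1}) - J(π_k) ≥ -√(2δ) γ ε^{π_{k+1}} / (1-γ)²`. -/
theorem trust_region_update_performance
    [Fintype S] [DecidableEq S] [Nonempty S] [Fintype A] [Nonempty A]
    (γ : ℝ) (hγ0 : 0 ≤ γ) (hγ1 : γ < 1)
    (P : S → A → S → ℝ) (hP0 : ∀ s a s', 0 ≤ P s a s')
    (hP1 : ∀ s a, (∑ s', P s a s') = 1)
    (μ : S → ℝ) (hμ0 : ∀ s, 0 ≤ μ s) (hμ1 : (∑ s, μ s) = 1)
    (R : S → A → S → ℝ)
    (pk pk1 : S → A → ℝ)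
    (hpk0 : ∀ s a, 0 < pk s a) (hpk1 : ∀ s, (∑ a, pk s a) = 1)
    (hpk10 : ∀ s a, 0 ≤ pk1 s a) (hpk11 : ∀ s, (∑ a, pk1 s a) = 1)
    (V : S → ℝ)
    (hV : ∀ s, V s = ∑ a, pk s a * (∑ s', P s a s' * (R s a s' + γ * V s')))
    (δ : ℝ) (hδ : 0 < δ)
    (hsurr : 0 ≤ ∑ s, dFut γ P μ pk s * (∑ a, pk1 s a * Adv γ P R V s a))
    (hkl : (∑ s, dFut γ P μ pk s * DKL pk1 pk s) ≤ δ) :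
    Jret γ P R μ pk1 - Jret γ P R μ pk
      ≥ -(Real.sqrt (2 * δ) * γ * (⨆ t, |∑ a, pk1 t a * Adv γ P R V t a|))
          / (1 - γ) ^ 2 :=
  trust_region_update_performance_general γ hγ0 hγ1 P hP0 hP1 μ hμ0 hμ1 R pk pk1 hpk0 hpk1 hpk10
    hpk11 V hV δ hsurr hkl
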